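/- For every fixed $m \in \mathbb{N}$, $\int_3^n x \log \log x \, dx = \frac{n^2 \log \log n}{2} - \frac{n^2}{2}\, h_m(n) + O\left( \frac{n^2}{\log^{m+1} n} \right)$ as $n \to \infty$. -/

import Mathlib

/-!
Let `F(x) = x² log log x / 2 - (x²/2) h_m(x)`. Since
`d/dx [x² / (2 log^j x)] = x / log^j x - (j/2) x / log^(j+1) x`, the derivatives of the terms of
`(x²/2) h_m(x)` telescope and `F'(x) = x log log x + m! x / (2^(m+1) log^(m+1) x)`. The error is
therefore a constant plus `m!/2^(m+1) ∫_3^n x / log^(m+1) x dx`. Splitting this integral at `√n`,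
where `log x ≥ (log n)/2`, bounds it by `O(n) + O(n² / log^(m+1) n)`.
-/

open Filter Real

/-- `h_m(x) = ∑_{j=1}^m (j-1)! / (2^j log^j x)`. -/
noncomputable def hAux (m : ℕ) (x : ℝ) : ℝ :=
  ∑ j ∈ Finset.Icc 1 m, (Nat.factorial (j - 1) : ℝ) / (2 ^ j * Real.log x ^ j)

open Asymptotics intervalIntegral

noncomputable def hSummand (j : ℕ) (x : ℝ) : ℝ :=
  (j - 1).factorial / (2 ^ j * log x ^ j)

lemma hAux_succ (m : ℕ) (x : ℝ) : hAux (m + 1) x = hAux m x + hSummand (m + 1) x :=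
  Finset.sum_Icc_succ_top (Nat.le_add_left 1 m) _

lemma hSummand_one (x : ℝ) : hSummand 1 x = 1 / (2 * log x) := by
  simp [hSummand]

noncomputable def loglogPrimitive (m : ℕ) (x : ℝ) : ℝ :=
  x ^ 2 * log (log x) / 2 - x ^ 2 / 2 * hAux m x

lemma mul_hSummand_succ (m : ℕ) (x : ℝ) :
    x * hSummand (m + 1) x = m.factorial / 2 ^ (m + 1) * (x / log x ^ (m + 1)) := by
  rw [hSummand, Nat.add_sub_cancel]
  ring

lemma hasDerivAt_sq_div_two_mul_hSummand {j : ℕ} (hj : 1 ≤ j) {x : ℝ} (hx : 1 < x) :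
    HasDerivAt (fun y => y ^ 2 / 2 * hSummand j y)
      (x * hSummand j x - x * hSummand (j + 1) x) x := by
  have hlog : log x ≠ 0 := (log_pos hx).ne'
  have hden : HasDerivAt (fun y => 2 ^ j * log y ^ j)
      (2 ^ j * (j * log x ^ (j - 1) * x⁻¹)) x :=
    ((hasDerivAt_log (by positivity)).pow j).const_mul _
  have := ((hasDerivAt_pow 2 x).div_const 2).fun_mul
    ((hasDerivAt_const x ((j - 1).factorial : ℝ)).fun_div hden (by positivity))
  refine this.congr_deriv ?_
  obtain ⟨i, rfl⟩ := Nat.exists_eq_add_of_le' hj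
  simp only [hSummand, Nat.add_sub_cancel, Nat.factorial_succ]
  field_simp
  push_cast
  ring

lemma hasDerivAt_sq_div_two_mul_hAux (m : ℕ) {x : ℝ} (hx : 1 < x) :
    HasDerivAt (fun y => y ^ 2 / 2 * hAux m y)
      (x * hSummand 1 x - x * hSummand (m + 1) x) x := by
  induction m with
  | zero => simpa [hAux] using hasDerivAt_const x (0 : ℝ)
  | succ m ih =>
    simp only [hAux_succ, mul_add]
    exact (ih.fun_add (hasDerivAt_sq_div_two_mul_hSummand (Nat.le_add_left 1 m) hx)).congr_deriv
      (by ring)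

lemma hasDerivAt_loglogPrimitive (m : ℕ) {x : ℝ} (hx : 1 < x) :
    HasDerivAt (loglogPrimitive m) (x * log (log x) + x * hSummand (m + 1) x) x := by
  have hlog : log x ≠ 0 := (log_pos hx).ne'
  have hll := ((hasDerivAt_pow 2 x).fun_mul ((hasDerivAt_log (by positivity)).log hlog)).div_const 2
  refine (hll.fun_sub (hasDerivAt_sq_div_two_mul_hAux m hx)).congr_deriv ?_
  rw [hSummand_one]
  field_simp
  ring

lemma continuousOn_log_Ioi_one : ContinuousOn log (Set.Ioi 1) :=
  continuousOn_log.mono fun _ hx => (zero_lt_one.trans hx).ne'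

lemma continuousOn_div_log_pow (k : ℕ) : ContinuousOn (fun x => x / log x ^ k) (Set.Ioi 1) :=
  continuousOn_id.div (continuousOn_log_Ioi_one.pow k) fun _ hx => pow_ne_zero k (log_pos hx).ne'

lemma intervalIntegrable_of_continuousOn_Ioi {f : ℝ → ℝ} {c a b : ℝ}
    (hf : ContinuousOn f (Set.Ioi c)) (ha : c < a) (hb : c < b) :
    IntervalIntegrable f MeasureTheory.volume a b :=
  (hf.mono fun _ hx => (lt_min ha hb).trans_le hx.1).intervalIntegrable

lemma integral_mul_log_log_eq (m : ℕ) {a b : ℝ} (ha : 1 < a) (hb : 1 < b) :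
    ∫ x in a..b, x * log (log x) = loglogPrimitive m b - loglogPrimitive m a -
      m.factorial / 2 ^ (m + 1) * ∫ x in a..b, x / log x ^ (m + 1) := by
  have hmain : IntervalIntegrable (fun x => x * log (log x)) MeasureTheory.volume a b :=
    intervalIntegrable_of_continuousOn_Ioi (continuousOn_id.mul
      (continuousOn_log_Ioi_one.log fun _ hx => (log_pos hx).ne')) ha hb
  have hrem : IntervalIntegrable (fun x => x * hSummand (m + 1) x) MeasureTheory.volume a b := by
    simp only [mul_hSummand_succ]
    exact (intervalIntegrable_of_continuousOn_Ioi (continuousOn_div_log_pow _) ha hb).const_mul _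
  have hftc := integral_eq_sub_of_hasDerivAt
    (fun x hx => hasDerivAt_loglogPrimitive m ((lt_min ha hb).trans_le hx.1)) (hmain.add hrem)
  rw [integral_add hmain hrem] at hftc
  simp only [mul_hSummand_succ, integral_const_mul] at hftc
  linarith

lemma norm_integral_div_log_pow_le_of_le_sqrt (k : ℕ) {a n : ℝ} (ha : 1 < a) (han : a ≤ √n) :
    ‖∫ x in a..√n, x / log x ^ k‖ ≤ n / log a ^ k := by
  have hloga : 0 < log a := log_pos ha
  have hbound : ∀ x ∈ Set.uIoc a √n, ‖x / log x ^ k‖ ≤ √n / log a ^ k := by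
    intro x hx
    rw [Set.uIoc_of_le han] at hx
    have hlog : log a ≤ log x := log_le_log (by linarith) hx.1.le
    rw [norm_of_nonneg (div_nonneg (by linarith [hx.1]) (pow_nonneg (by linarith) k))]
    gcongr
    exact hx.2
  calc ‖∫ x in a..√n, x / log x ^ k‖ ≤ √n / log a ^ k * |√n - a| :=
        norm_integral_le_of_norm_le_const hbound
    _ ≤ √n / log a ^ k * √n := by
        gcongr
        rw [abs_of_nonneg (by linarith)]
        linarith
    _ = n / log a ^ k := by
        rw [div_mul_eq_mul_div, mul_self_sqrt (sqrt_pos.mp (by linarith)).le]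

lemma norm_integral_sqrt_div_log_pow_le (k : ℕ) {n : ℝ} (hn : 1 < n) :
    ‖∫ x in √n..n, x / log x ^ k‖ ≤ 2 ^ k * (n ^ 2 / log n ^ k) := by
  have hsqrt : 1 < √n := by rwa [lt_sqrt zero_le_one, one_pow]
  have hsqrt_le : √n ≤ n := (sqrt_le_left (by linarith)).mpr (by nlinarith)
  have hlogn : 0 < log n / 2 := by linarith [log_pos hn]
  have hbound : ∀ x ∈ Set.uIoc √n n, ‖x / log x ^ k‖ ≤ n / (log n / 2) ^ k := by
    intro x hx
    rw [Set.uIoc_of_le hsqrt_le] at hx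
    have hlog : log n / 2 ≤ log x := by
      rw [← log_sqrt (by linarith)]
      exact log_le_log (by linarith) hx.1.le
    rw [norm_of_nonneg (div_nonneg (by linarith [hx.1]) (pow_nonneg (by linarith) k))]
    gcongr
    exact hx.2
  calc ‖∫ x in √n..n, x / log x ^ k‖ ≤ n / (log n / 2) ^ k * |n - √n| :=
        norm_integral_le_of_norm_le_const hbound
    _ ≤ n / (log n / 2) ^ k * n := by
        gcongr
        rw [abs_of_nonneg (by linarith)]
        linarith
    _ = 2 ^ k * (n ^ 2 / log n ^ k) := by
        rw [div_pow]
        field_simp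

lemma isBigO_id_sq_div_log_pow (k : ℕ) :
    (fun n : ℝ => n) =O[atTop] fun n => n ^ 2 / log n ^ k := by
  refine IsBigO.of_bound 1 ?_
  filter_upwards [isLittleO_pow_log_id_atTop.bound one_pos, eventually_gt_atTop 1]
    with n hlog hn
  have hpos : 0 < log n ^ k := pow_pos (log_pos hn) k
  rw [one_mul, norm_of_nonneg (by linarith), norm_of_nonneg (by positivity)]
  rw [one_mul, norm_of_nonneg hpos.le, id, norm_of_nonneg (by linarith)] at hlog
  rw [le_div_iff₀ hpos]
  nlinarith

lemma isBigO_integral_div_log_pow (k : ℕ) {a : ℝ} (ha : 1 < a) :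
    (fun n => ∫ x in a..n, x / log x ^ k) =O[atTop] fun n => n ^ 2 / log n ^ k := by
  have hsqrt : ∀ᶠ n in atTop, a ≤ √n := tendsto_atTop.mp tendsto_sqrt_atTop a
  have hsplit : (fun n => (∫ x in a..√n, x / log x ^ k) + ∫ x in √n..n, x / log x ^ k)
      =ᶠ[atTop] fun n => ∫ x in a..n, x / log x ^ k := by
    filter_upwards [hsqrt, eventually_gt_atTop 1] with n han hn
    have hsqrt_one : 1 < √n := ha.trans_le han
    exact integral_add_adjacent_intervals
      (intervalIntegrable_of_continuousOn_Ioi (continuousOn_div_log_pow k) ha hsqrt_one)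
      (intervalIntegrable_of_continuousOn_Ioi (continuousOn_div_log_pow k) hsqrt_one hn)
  have hlower : (fun n => ∫ x in a..√n, x / log x ^ k) =O[atTop] fun n => n := by
    refine IsBigO.of_bound (1 / log a ^ k) ?_
    filter_upwards [hsqrt, eventually_gt_atTop 0] with n han hn
    rw [norm_of_nonneg hn.le, ← mul_div_right_comm, one_mul]
    exact norm_integral_div_log_pow_le_of_le_sqrt k ha han
  have hupper : (fun n => ∫ x in √n..n, x / log x ^ k) =O[atTop]
      fun n => n ^ 2 / log n ^ k := by
    refine IsBigO.of_bound (2 ^ k) ?_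
    filter_upwards [eventually_gt_atTop 1] with n hn
    rw [norm_of_nonneg (r := n ^ 2 / log n ^ k) (by have := log_pos hn; positivity)]
    exact norm_integral_sqrt_div_log_pow_le k hn
  exact ((hlower.trans (isBigO_id_sq_div_log_pow k)).add hupper).congr' hsplit
    EventuallyEq.rfl

theorem integral_x_loglog_general (m : ℕ) :
    (fun n : ℝ =>
        (∫ x in (3 : ℝ)..n, x * Real.log (Real.log x)) -
          (n ^ 2 * Real.log (Real.log n) / 2 - n ^ 2 / 2 * hAux m n))
      =O[atTop] fun n : ℝ => n ^ 2 / Real.log n ^ (m + 1) := by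
  have hconst : (fun _ => -loglogPrimitive m 3) =O[atTop] fun n : ℝ => n ^ 2 / log n ^ (m + 1) :=
    (isLittleO_const_id_atTop _).isBigO.trans (isBigO_id_sq_div_log_pow (m + 1))
  have h3 : (1 : ℝ) < 3 := by norm_num
  have hrem := (isBigO_integral_div_log_pow (m + 1) h3).const_mul_left
    ((m.factorial : ℝ) / 2 ^ (m + 1))
  refine (hconst.sub hrem).congr' ?_ EventuallyEq.rfl
  filter_upwards [eventually_gt_atTop 1] with n hn
  rw [integral_mul_log_log_eq m h3 hn]
  unfold loglogPrimitive
  ring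

/-- For every fixed `m ≥ 1`,
`∫_3^n x log log x dx = n² log log n / 2 - (n²/2) h_m(n) + O(n² / log^{m+1} n)` as `n → ∞`. -/
theorem integral_x_loglog (m : ℕ) (hm : 1 ≤ m) :
    (fun n : ℝ =>
        (∫ x in (3 : ℝ)..n, x * Real.log (Real.log x)) -
          (n ^ 2 * Real.log (Real.log n) / 2 - n ^ 2 / 2 * hAux m n))
      =O[atTop] fun n : ℝ => n ^ 2 / Real.log n ^ (m + 1) :=
  integral_x_loglog_general m
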